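/- The improper integrals ∫₀^∞ t/sinh(t) dt and ∫₀^∞ t²/sinh(t) dt converge and equal π²/4 and (7/2)ζ(3), respectively, where ζ is the Riemann zeta function. Consequently, for a one-sided infinite regular line network with Rayleigh fading, m-phase TDMA and α = 2, whose SIR satisfies ℙ[π√SIR/m > t] = t/sinh(t) for t > 0, the moments are E[√SIR] = (m/π)∫₀^∞ t/sinh t dt = πm/4 and E[SIR] = (m/π)²·2∫₀^∞ t²/sinh t dt = 7ζ(3)m²/π². -/

import Mathlib

/-!
For `t > 0`, `1 / sinh t = 2 ∑ⱼ exp (-(2j+1) t)`. Integrating term by term (monotone convergence)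
against `tⁿ` and using `∫₀^∞ tⁿ e^{-ct} dt = n! / c^{n+1}` gives
`∫₀^∞ tⁿ / sinh t dt = 2 n! ∑ⱼ (2j+1)^{-(n+1)} = 2 n! (1 - 2^{-(n+1)}) ζ(n+1)`,
which for `n = 1, 2` is `π²/4` and `(7/2) ζ(3)`. The moments of `T = π √SIR / m` then follow from
the layer-cake formula `E[T^{n+1}] = (n+1) ∫₀^∞ tⁿ ℙ[T > t] dt`, and `√SIR = (m/π) T`.
-/

open MeasureTheory ProbabilityTheory Set Real

/-- The Riemann zeta function for real argument, `ζ(s) = ∑_{n=1}^∞ n^{-s}`. -/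
noncomputable def zetaReal (s : ℝ) : ℝ := ∑' n : ℕ, ((n : ℝ) + 1) ^ (-s)

open scoped Nat

section OfLIntegral

variable {α : Type*} [MeasurableSpace α] {μ : Measure α} {f : α → ℝ} {c : ℝ}

lemma integrable_of_lintegral_ofReal_eq (hf : AEStronglyMeasurable f μ) (hf0 : 0 ≤ᵐ[μ] f)
    (h : ∫⁻ a, ENNReal.ofReal (f a) ∂μ = ENNReal.ofReal c) : Integrable f μ :=
  ⟨hf, by rw [hasFiniteIntegral_iff_ofReal hf0, h]; exact ENNReal.ofReal_lt_top⟩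

lemma integral_eq_of_lintegral_ofReal_eq (hf : AEStronglyMeasurable f μ) (hf0 : 0 ≤ᵐ[μ] f)
    (hc : 0 ≤ c) (h : ∫⁻ a, ENNReal.ofReal (f a) ∂μ = ENNReal.ofReal c) : ∫ a, f a ∂μ = c := by
  rw [integral_eq_lintegral_of_nonneg_ae hf0 hf, h, ENNReal.toReal_ofReal hc]

end OfLIntegral

theorem integral_pow_succ_eq_of_ccdf {Ω : Type*} [MeasurableSpace Ω] {μ : Measure Ω}
    {X : Ω → ℝ} {f : ℝ → ℝ} (hX : 0 ≤ᵐ[μ] X) (hXm : AEMeasurable X μ)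
    (htail : ∀ t > 0, μ {ω | t < X ω} = ENNReal.ofReal (f t)) (hf : ∀ t > 0, 0 ≤ f t)
    (n : ℕ) (hint : IntegrableOn (fun t => t ^ n * f t) (Ioi 0)) :
    ∫ ω, X ω ^ (n + 1) ∂μ = (n + 1) * ∫ t in Ioi 0, t ^ n * f t := by
  have hpow (x : ℝ) : x ^ ((n : ℝ) + 1) = x ^ (n + 1) := by
    exact_mod_cast rpow_natCast x (n + 1)
  have hlayer := lintegral_rpow_eq_lintegral_meas_lt_mul μ hX hXm (p := n + 1) (by positivity)
  simp only [hpow, add_sub_cancel_right, rpow_natCast] at hlayer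
  have hint0 : 0 ≤ᵐ[volume.restrict (Ioi 0)] fun t => t ^ n * f t := by
    filter_upwards [ae_restrict_mem measurableSet_Ioi] with t (ht : 0 < t)
    exact mul_nonneg (pow_nonneg ht.le n) (hf t ht)
  have htail_lintegral : ∫⁻ t in Ioi 0, μ {ω | t < X ω} * ENNReal.ofReal (t ^ n) =
      ENNReal.ofReal (∫ t in Ioi 0, t ^ n * f t) := by
    rw [ofReal_integral_eq_lintegral_ofReal hint hint0]
    refine setLIntegral_congr_fun measurableSet_Ioi fun t (ht : 0 < t) => ?_
    rw [htail t ht, ← ENNReal.ofReal_mul (hf t ht), mul_comm]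
  refine integral_eq_of_lintegral_ofReal_eq (hXm.pow_const _).aestronglyMeasurable
    (hX.mono fun ω hω => pow_nonneg hω _)
    (mul_nonneg (by positivity) (integral_nonneg_of_ae hint0)) ?_
  rw [hlayer, htail_lintegral, ← ENNReal.ofReal_mul (by positivity)]

lemma hasSum_two_mul_exp_neg_odd_mul {t : ℝ} (ht : 0 < t) :
    HasSum (fun j : ℕ => 2 * exp (-((2 * j + 1) * t))) (sinh t)⁻¹ := by
  have hq : exp (-(2 * t)) < 1 := exp_lt_one_iff.mpr (by linarith)
  have hterm (j : ℕ) : 2 * exp (-((2 * j + 1) * t)) = 2 * exp (-t) * exp (-(2 * t)) ^ j := by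
    rw [← exp_nat_mul, mul_assoc, ← exp_add]
    ring_nf
  have hsinh : 2 * exp (-t) * sinh t = 1 - exp (-(2 * t)) := by
    have h : exp (-t) * exp t = 1 := by rw [← exp_add]; simp
    rw [sinh_eq, show -(2 * t) = -t + -t by ring, exp_add]
    linear_combination h
  have hinv : (sinh t)⁻¹ = 2 * exp (-t) * (1 - exp (-(2 * t)))⁻¹ := by
    rw [← hsinh, mul_inv, ← mul_assoc, mul_inv_cancel₀ (by positivity), one_mul]
  rw [funext hterm, hinv]
  exact (hasSum_geometric_of_lt_one (exp_nonneg _) hq).mul_left (2 * exp (-t))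

lemma summable_one_div_odd_pow {p : ℕ} (hp : 1 < p) :
    Summable fun j : ℕ => 1 / (2 * (j : ℝ) + 1) ^ p := by
  exact_mod_cast (Real.summable_one_div_nat_pow.mpr hp).comp_injective
    (i := fun j => 2 * j + 1) fun a b h => by simp only at h; omega

lemma tsum_one_div_odd_pow {p : ℕ} (hp : 1 < p) :
    ∑' j : ℕ, 1 / (2 * (j : ℝ) + 1) ^ p = (1 - 1 / 2 ^ p) * ∑' n : ℕ, 1 / (n : ℝ) ^ p := by
  have hs := Real.summable_one_div_nat_pow.mpr hp
  have h := tsum_even_add_odd (f := fun n : ℕ => 1 / (n : ℝ) ^ p)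
    (hs.comp_injective fun a b h => by omega) (hs.comp_injective fun a b h => by omega)
  simp only [Nat.cast_mul, Nat.cast_ofNat, Nat.cast_add, Nat.cast_one, mul_pow,
    ← one_div_mul_one_div, tsum_mul_left] at h
  linear_combination h

lemma zetaReal_natCast {p : ℕ} (hp : 1 < p) : zetaReal p = ∑' n : ℕ, 1 / (n : ℝ) ^ p := by
  rw [(Real.summable_one_div_nat_pow.mpr hp).tsum_eq_zero_add]
  simp [zetaReal]
  omega

lemma tsum_one_div_odd_sq : ∑' j : ℕ, 1 / (2 * (j : ℝ) + 1) ^ 2 = π ^ 2 / 8 := by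
  rw [tsum_one_div_odd_pow one_lt_two, hasSum_zeta_two.tsum_eq]
  ring

lemma tsum_one_div_odd_cube : ∑' j : ℕ, 1 / (2 * (j : ℝ) + 1) ^ 3 = 7 / 8 * zetaReal 3 := by
  rw [tsum_one_div_odd_pow (by norm_num), ← zetaReal_natCast (by norm_num)]
  norm_num

lemma integral_pow_mul_exp_neg_mul (k : ℕ) {c : ℝ} (hc : 0 < c) :
    ∫ x in Ioi 0, x ^ k * exp (-(c * x)) = k ! / c ^ (k + 1) := by
  have hGamma := integral_rpow_mul_exp_neg_mul_Ioi (a := k + 1) (by positivity) hc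
  simp only [add_sub_cancel_right, rpow_natCast] at hGamma
  rw [hGamma, Gamma_nat_eq_factorial, ← Nat.cast_succ, rpow_natCast, div_pow, one_pow,
    Nat.succ_eq_add_one]
  ring

lemma lintegral_pow_mul_exp_neg_mul (k : ℕ) {c : ℝ} (hc : 0 < c) :
    ∫⁻ x in Ioi 0, ENNReal.ofReal (x ^ k * exp (-(c * x))) =
      ENNReal.ofReal (k ! / c ^ (k + 1)) := by
  have hint : IntegrableOn (fun x : ℝ => x ^ k * exp (-(c * x))) (Ioi 0) :=
    .of_integral_ne_zero (by rw [integral_pow_mul_exp_neg_mul k hc]; positivity)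
  rw [← integral_pow_mul_exp_neg_mul k hc, ofReal_integral_eq_lintegral_ofReal hint]
  filter_upwards [ae_restrict_mem measurableSet_Ioi] with x (hx : 0 < x)
  exact mul_nonneg (pow_nonneg hx.le k) (exp_nonneg _)

lemma lintegral_pow_div_sinh (n : ℕ) :
    ∫⁻ t in Ioi 0, ENNReal.ofReal (t ^ n / sinh t) =
      ∑' j : ℕ, ENNReal.ofReal (2 * n ! / (2 * j + 1) ^ (n + 1)) := by
  calc ∫⁻ t in Ioi 0, ENNReal.ofReal (t ^ n / sinh t)
      = ∫⁻ t in Ioi 0, ∑' j : ℕ,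
          ENNReal.ofReal 2 * ENNReal.ofReal (t ^ n * exp (-((2 * j + 1) * t))) := by
        refine setLIntegral_congr_fun measurableSet_Ioi fun t (ht : 0 < t) => ?_
        have hs := (hasSum_two_mul_exp_neg_odd_mul ht).mul_left (t ^ n)
        rw [div_eq_mul_inv, ← hs.tsum_eq,
          ENNReal.ofReal_tsum_of_nonneg (fun j => by positivity) hs.summable]
        congr 1 with j
        rw [← ENNReal.ofReal_mul zero_le_two, mul_left_comm]
    _ = ∑' j : ℕ, ENNReal.ofReal 2 *
          ∫⁻ t in Ioi 0, ENNReal.ofReal (t ^ n * exp (-((2 * j + 1) * t))) := by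
        rw [lintegral_tsum fun j => by fun_prop]
        congr 1 with j
        exact lintegral_const_mul _ (by fun_prop)
    _ = ∑' j : ℕ, ENNReal.ofReal (2 * n ! / (2 * j + 1) ^ (n + 1)) := by
        congr 1 with j
        rw [lintegral_pow_mul_exp_neg_mul n (by positivity), ← ENNReal.ofReal_mul zero_le_two,
          mul_div_assoc]

lemma lintegral_pow_div_sinh_eq_ofReal {n : ℕ} (hn : n ≠ 0) :
    ∫⁻ t in Ioi 0, ENNReal.ofReal (t ^ n / sinh t) =
      ENNReal.ofReal (2 * n ! * ∑' j : ℕ, 1 / (2 * (j : ℝ) + 1) ^ (n + 1)) := by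
  have hs := summable_one_div_odd_pow (p := n + 1) (by omega)
  rw [lintegral_pow_div_sinh, ← tsum_mul_left,
    ENNReal.ofReal_tsum_of_nonneg (fun j => by positivity) (hs.mul_left _)]
  simp only [mul_one_div]

lemma pow_div_sinh_nonneg_ae (n : ℕ) :
    0 ≤ᵐ[volume.restrict (Ioi 0)] fun t : ℝ => t ^ n / sinh t := by
  filter_upwards [ae_restrict_mem measurableSet_Ioi] with t (ht : 0 < t)
  have := sinh_pos_iff.mpr ht
  positivity

lemma integrableOn_pow_div_sinh {n : ℕ} (hn : n ≠ 0) :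
    IntegrableOn (fun t => t ^ n / sinh t) (Ioi 0) :=
  integrable_of_lintegral_ofReal_eq (by fun_prop : Measurable _).aestronglyMeasurable
    (pow_div_sinh_nonneg_ae n) (lintegral_pow_div_sinh_eq_ofReal hn)

lemma integral_pow_div_sinh {n : ℕ} (hn : n ≠ 0) :
    ∫ t in Ioi 0, t ^ n / sinh t = 2 * n ! * ∑' j : ℕ, 1 / (2 * (j : ℝ) + 1) ^ (n + 1) :=
  integral_eq_of_lintegral_ofReal_eq (by fun_prop : Measurable _).aestronglyMeasurable
    (pow_div_sinh_nonneg_ae n) (by positivity) (lintegral_pow_div_sinh_eq_ofReal hn)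

theorem integral_id_div_sinh : ∫ t in Ioi 0, t / sinh t = π ^ 2 / 4 := by
  have h := integral_pow_div_sinh one_ne_zero
  simp only [pow_one] at h
  rw [h, one_add_one_eq_two, tsum_one_div_odd_sq, Nat.factorial_one]
  ring

theorem integral_sq_div_sinh : ∫ t in Ioi 0, t ^ 2 / sinh t = 7 / 2 * zetaReal 3 := by
  rw [integral_pow_div_sinh two_ne_zero, tsum_one_div_odd_cube, Nat.factorial_two]
  ring

theorem tdma_sir_moments_general
    {Ω : Type*} [MeasureSpace Ω]
    (m : ℝ) (hm : 0 < m) (SIR : Ω → ℝ) (hmeas : Measurable SIR) (hpos : ∀ ω, 0 ≤ SIR ω)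
    (hccdf : ∀ t : ℝ, 0 < t →
      ℙ {ω | π * Real.sqrt (SIR ω) / m > t} = ENNReal.ofReal (t / Real.sinh t)) :
    IntegrableOn (fun t : ℝ => t / Real.sinh t) (Ioi 0) ∧
    (∫ t in Ioi (0 : ℝ), t / Real.sinh t) = π ^ 2 / 4 ∧
    IntegrableOn (fun t : ℝ => t ^ 2 / Real.sinh t) (Ioi 0) ∧
    (∫ t in Ioi (0 : ℝ), t ^ 2 / Real.sinh t) = (7 / 2) * zetaReal 3 ∧
    (∫ ω, Real.sqrt (SIR ω)) = π * m / 4 ∧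
    (∫ ω, SIR ω) = 7 * zetaReal 3 * m ^ 2 / π ^ 2 := by
  have hint₁ : IntegrableOn (fun t : ℝ => t / sinh t) (Ioi 0) := by
    simpa using integrableOn_pow_div_sinh one_ne_zero
  have hint₂ := integrableOn_pow_div_sinh two_ne_zero
  set T : Ω → ℝ := fun ω => π * √(SIR ω) / m with hT
  have hT0 : 0 ≤ᵐ[ℙ] T := ae_of_all _ fun ω => by positivity
  have hTm : AEMeasurable T ℙ := by fun_prop
  have hf (t : ℝ) (ht : 0 < t) : 0 ≤ t / sinh t := div_nonneg ht.le (sinh_pos_iff.mpr ht).le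
  have hET : ∫ ω, T ω = π ^ 2 / 4 := by
    simpa [integral_id_div_sinh] using
      integral_pow_succ_eq_of_ccdf hT0 hTm hccdf hf 0 (by simpa using hint₁)
  have hET2 : ∫ ω, T ω ^ 2 = 7 * zetaReal 3 := by
    have hintegrand : ∫ t in Ioi 0, t ^ 1 * (t / sinh t) = ∫ t in Ioi 0, t ^ 2 / sinh t :=
      setIntegral_congr_fun measurableSet_Ioi fun t _ => by ring
    have h := integral_pow_succ_eq_of_ccdf hT0 hTm hccdf hf 1
      (hint₂.congr_fun (fun t _ => by ring) measurableSet_Ioi)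
    rw [hintegrand, integral_sq_div_sinh] at h
    norm_num at h
    linarith
  have hsqrt (ω : Ω) : √(SIR ω) = m / π * T ω := by
    rw [hT]; field_simp
  have hSIR (ω : Ω) : SIR ω = (m / π) ^ 2 * T ω ^ 2 := by
    rw [← mul_pow, ← hsqrt, sq_sqrt (hpos ω)]
  refine ⟨hint₁, integral_id_div_sinh, hint₂, integral_sq_div_sinh, ?_, ?_⟩
  · simp_rw [hsqrt, integral_const_mul, hET]
    field_simp
  · simp_rw [hSIR, integral_const_mul, hET2]
    field_simp

/-- `∫₀^∞ t/sinh t dt = π²/4` and `∫₀^∞ t²/sinh t dt = (7/2) ζ(3)`. Consequently, for a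
TDMA line network (`α = 2`, reuse parameter `m`) whose SIR satisfies
`ℙ[π √SIR / m > t] = t / sinh t` for `t > 0`, one has `E[√SIR] = π m/4` and
`E[SIR] = 7 ζ(3) m²/π²`. -/
theorem tdma_sir_moments
    {Ω : Type*} [MeasureSpace Ω] [IsProbabilityMeasure (ℙ : Measure Ω)]
    (m : ℝ) (hm : 0 < m) (SIR : Ω → ℝ) (hmeas : Measurable SIR) (hpos : ∀ ω, 0 ≤ SIR ω)
    (hccdf : ∀ t : ℝ, 0 < t →
      ℙ {ω | π * Real.sqrt (SIR ω) / m > t} = ENNReal.ofReal (t / Real.sinh t)) :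
    IntegrableOn (fun t : ℝ => t / Real.sinh t) (Ioi 0) ∧
    (∫ t in Ioi (0 : ℝ), t / Real.sinh t) = π ^ 2 / 4 ∧
    IntegrableOn (fun t : ℝ => t ^ 2 / Real.sinh t) (Ioi 0) ∧
    (∫ t in Ioi (0 : ℝ), t ^ 2 / Real.sinh t) = (7 / 2) * zetaReal 3 ∧
    (∫ ω, Real.sqrt (SIR ω)) = π * m / 4 ∧
    (∫ ω, SIR ω) = 7 * zetaReal 3 * m ^ 2 / π ^ 2 :=
  tdma_sir_moments_general m hm SIR hmeas hpos hccdf
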